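/- Let μ be the uniform probability measure on the unit sphere S² ⊂ ℝ³ and let 0 < κ < √3. Then the double average of the mutual information over the isotropic correlation matrix E = (κ/√3)·I₃ satisfies ∫_{S²} ∫_{S²} Ibin((κ/√3)·(n·m)) dμ(n) dμ(m) = ((3+κ²)·artanh(κ/√3) − √3·κ·(1 − ln(1−κ²/3))) / (√3·κ·ln 4). -/

import Mathlib

open MeasureTheory Matrix

/-- Euclidean norm of a vector in ℝ³. -/
noncomputable def enorm3 (v : Fin 3 → ℝ) : ℝ := Real.sqrt (v 0 ^ 2 + v 1 ^ 2 + v 2 ^ 2)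

/-- Euclidean inner product on ℝ³. -/
def dot3 (v w : Fin 3 → ℝ) : ℝ := v 0 * w 0 + v 1 * w 1 + v 2 * w 2

/-- `μ` is the uniform (rotation-invariant) probability measure on the unit sphere
`S² = {v ∈ ℝ³ : |v| = 1}`: it is a probability measure, it gives full measure to the
sphere, and it is invariant under every orthogonal transformation of ℝ³. -/
def IsUniformSphereMeasure (μ : Measure (Fin 3 → ℝ)) : Prop :=
  IsProbabilityMeasure μ ∧
  μ {v | v 0 ^ 2 + v 1 ^ 2 + v 2 ^ 2 ≠ 1} = 0 ∧
  ∀ O : Matrix (Fin 3) (Fin 3) ℝ, O * Oᵀ = 1 → μ.map (Matrix.mulVec O) = μ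


/-- The binary mutual information `Ibin(x) = ((1+x)·log₂(1+x) + (1−x)·log₂(1−x))/2`. -/
noncomputable def Ibin (x : ℝ) : ℝ :=
  ((1 + x) * Real.logb 2 (1 + x) + (1 - x) * Real.logb 2 (1 - x)) / 2

/-- The inverse hyperbolic tangent. -/
noncomputable def artanh (x : ℝ) : ℝ := Real.log ((1 + x) / (1 - x)) / 2

/-!
By rotation invariance the inner integral does not depend on the unit vector `m`: it equals
`∫ Ibin (c * v 0) dμ` with `c = κ / √3`. Expanding
`Ibin x = ∑ x ^ (2k+2) / (2 ln 2 (k+1)(2k+1))` reduces this to the even moments of the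
coordinate `v 0`, which are those of the uniform distribution on `[-1, 1]` (Archimedes).
Comparing the coefficients of `x²` in
`∫ (x v₁ + v₀) ^ (2K+2) = (1 + x²) ^ (K+1) ∫ v₀ ^ (2K+2)`
gives `(2K+1) ∫ v₁² v₀ ^ 2K = ∫ v₀ ^ (2K+2)`, and with `v₀² + v₁² + v₂² = 1` this yields
`∫ v₀ ^ 2K = 1 / (2K+1)`. The resulting series is summed by partial fractions.
-/

lemma measurable_Ibin : Measurable Ibin := by
  unfold Ibin Real.logb
  fun_prop

lemma hasSum_artanh {x : ℝ} (hx : |x| < 1) :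
    HasSum (fun k : ℕ => x ^ (2 * k + 1) / (2 * k + 1)) (artanh x) := by
  obtain ⟨hx₁, hx₂⟩ := abs_lt.1 hx
  rw [artanh, Real.log_div (by linarith) (by linarith)]
  refine ((Real.hasSum_log_sub_log_of_abs_lt_one hx).div_const 2).congr_fun fun k => ?_
  ring

lemma hasSum_Ibin {x : ℝ} (hx : |x| < 1) :
    HasSum (fun k : ℕ => x ^ (2 * k + 2) / (2 * Real.log 2 * ((k + 1) * (2 * k + 1))))
      (Ibin x) := by
  obtain ⟨hx₁, hx₂⟩ := abs_lt.1 hx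
  have hx2 : |x ^ 2| < 1 := by rw [abs_pow]; exact pow_lt_one₀ (abs_nonneg x) hx two_ne_zero
  have hIbin : Ibin x = (2 * x * artanh x - -Real.log (1 - x ^ 2)) / (2 * Real.log 2) := by
    rw [Ibin, artanh, Real.logb, Real.logb, Real.log_div (by linarith) (by linarith),
      show 1 - x ^ 2 = (1 + x) * (1 - x) by ring, Real.log_mul (by linarith) (by linarith)]
    ring
  rw [hIbin]
  refine ((((hasSum_artanh hx).mul_left (2 * x)).sub
    (Real.hasSum_pow_div_log_of_abs_lt_one hx2)).div_const _).congr_fun fun k => ?_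
  rw [← pow_mul, pow_succ]
  field_simp
  ring

lemma hasSum_pow_div_succ_mul_odd_mul_odd {c : ℝ} (hc₀ : c ≠ 0) (hc₁ : |c| < 1) :
    HasSum (fun k : ℕ => c ^ (2 * k + 2) / ((k + 1) * (2 * k + 1) * (2 * k + 3)))
      (c * artanh c + Real.log (1 - c ^ 2) + artanh c / c - 1) := by
  have hc2 : |c ^ 2| < 1 := by rw [abs_pow]; exact pow_lt_one₀ (abs_nonneg c) hc₁ two_ne_zero
  have hshift : HasSum (fun k : ℕ => c ^ (2 * k + 3) / (2 * k + 3)) (artanh c - c) := by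
    have h := (hasSum_nat_add_iff' 1).2 (hasSum_artanh hc₁)
    simp only [Finset.sum_range_one, Nat.cast_zero, mul_zero, zero_add, pow_one, div_one] at h
    refine h.congr_fun fun k => ?_
    push_cast
    ring_nf
  rw [show c * artanh c + Real.log (1 - c ^ 2) + artanh c / c - 1
      = c * artanh c + (artanh c - c) / c - -Real.log (1 - c ^ 2) by field_simp; ring]
  -- partial fractions: 1 / ((k+1)(2k+1)(2k+3)) = 1/(2k+1) + 1/(2k+3) - 1/(k+1)
  refine ((((hasSum_artanh hc₁).mul_left c).add (hshift.div_const c)).sub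
    (Real.hasSum_pow_div_log_of_abs_lt_one hc2)).congr_fun fun k => ?_
  rw [← pow_mul, pow_succ, pow_succ, pow_succ]
  field_simp
  ring

lemma integral_tsum_mul_pow {α : Type*} [MeasurableSpace α] {μ : Measure α} [IsFiniteMeasure μ]
    {X : α → ℝ} (hX : AEStronglyMeasurable X μ) (hX₁ : ∀ᵐ x ∂μ, |X x| ≤ 1)
    {a : ℕ → ℝ} (ha : Summable fun k => |a k|) (e : ℕ → ℕ) :
    ∫ x, ∑' k, a k * X x ^ e k ∂μ = ∑' k, a k * ∫ x, X x ^ e k ∂μ := by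
  have hpow : ∀ k, ∀ᵐ x ∂μ, ‖X x ^ e k‖ ≤ 1 := fun k => by
    filter_upwards [hX₁] with x hx
    rw [norm_pow, Real.norm_eq_abs]
    exact pow_le_one₀ (abs_nonneg _) hx
  have hint : ∀ k, Integrable (fun x => a k * X x ^ e k) μ := fun k =>
    (Integrable.of_bound (hX.pow _) 1 (hpow k)).const_mul _
  have hnorm : ∀ k, ∫ x, ‖a k * X x ^ e k‖ ∂μ ≤ |a k| * μ.real Set.univ := fun k =>
    calc ∫ x, ‖a k * X x ^ e k‖ ∂μ ≤ ∫ _, |a k| ∂μ := by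
          refine integral_mono_ae (hint k).norm (integrable_const _) ?_
          filter_upwards [hpow k] with x hx
          rw [norm_mul, Real.norm_eq_abs]
          exact mul_le_of_le_one_right (abs_nonneg _) hx
      _ = |a k| * μ.real Set.univ := by rw [integral_const, smul_eq_mul, mul_comm]
  rw [← integral_tsum_of_summable_integral_norm hint
    ((ha.mul_right _).of_nonneg_of_le (fun k => integral_nonneg fun _ => norm_nonneg _) hnorm)]
  simp_rw [integral_const_mul]

def IsOrthogonallyInvariant (μ : Measure (Fin 3 → ℝ)) : Prop :=
  ∀ O : Matrix (Fin 3) (Fin 3) ℝ, O * Oᵀ = 1 → μ.map O.mulVec = μ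

lemma exists_orthogonal_row_eq (u : Fin 3 → ℝ) (hu : u 0 ^ 2 + u 1 ^ 2 + u 2 ^ 2 = 1) :
    ∃ O : Matrix (Fin 3) (Fin 3) ℝ, O * Oᵀ = 1 ∧ ∀ j, O 0 j = u j := by
  have hunit : ‖WithLp.toLp 2 u‖ = 1 := by
    simp [EuclideanSpace.norm_eq, Fin.sum_univ_three, hu]
  have horth : Orthonormal ℝ (({0} : Set (Fin 3)).domRestrict fun _ => WithLp.toLp 2 u) :=
    ⟨fun _ => hunit, fun i j hij => absurd (Subsingleton.elim i j) hij⟩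
  obtain ⟨b, hb⟩ := horth.exists_orthonormalBasis_extension_of_card_eq (by simp)
  let e := EuclideanSpace.basisFun (Fin 3) ℝ
  refine ⟨(e.toBasis.toMatrix b)ᵀ, ?_, fun j => ?_⟩
  · simpa using (mem_orthogonalGroup_iff' _ _).1 (e.toMatrix_orthonormalBasis_mem_orthogonal b)
  · simp [e, Module.Basis.toMatrix_apply, hb 0 rfl]

section Sphere

variable {μ : Measure (Fin 3 → ℝ)}

lemma integral_comp_mulVec (hμ : IsOrthogonallyInvariant μ) {O : Matrix (Fin 3) (Fin 3) ℝ}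
    (hO : O * Oᵀ = 1) {f : (Fin 3 → ℝ) → ℝ} (hf : Measurable f) :
    ∫ v, f (O *ᵥ v) ∂μ = ∫ v, f v ∂μ := by
  conv_rhs => rw [← hμ O hO]
  exact (integral_map (by fun_prop) hf.aestronglyMeasurable).symm

lemma integral_comp_dot3 (hμ : IsOrthogonallyInvariant μ) {u : Fin 3 → ℝ}
    (hu : u 0 ^ 2 + u 1 ^ 2 + u 2 ^ 2 = 1) {g : ℝ → ℝ} (hg : Measurable g) :
    ∫ v, g (dot3 v u) ∂μ = ∫ v, g (v 0) ∂μ := by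
  obtain ⟨O, hO, hrow⟩ := exists_orthogonal_row_eq u hu
  rw [← integral_comp_mulVec hμ hO (f := fun w => g (w 0)) (by fun_prop)]
  congr! 3 with v
  simp only [mulVec, dotProduct, Fin.sum_univ_three, hrow, dot3]
  ring

lemma ae_abs_apply_le_one (hS : ∀ᵐ v ∂μ, v 0 ^ 2 + v 1 ^ 2 + v 2 ^ 2 = 1) (i : Fin 3) :
    ∀ᵐ v ∂μ, |v i| ≤ 1 := by
  filter_upwards [hS] with v hv
  refine (sq_le_one_iff_abs_le_one _).1 ?_
  fin_cases i <;> dsimp <;> nlinarith [sq_nonneg (v 0), sq_nonneg (v 1), sq_nonneg (v 2)]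

lemma integrable_pow_mul_pow [IsFiniteMeasure μ]
    (hS : ∀ᵐ v ∂μ, v 0 ^ 2 + v 1 ^ 2 + v 2 ^ 2 = 1) (i j : Fin 3) (a b : ℕ) :
    Integrable (fun v => v i ^ a * v j ^ b) μ := by
  refine Integrable.of_bound (by fun_prop) 1 ?_
  filter_upwards [ae_abs_apply_le_one hS i, ae_abs_apply_le_one hS j] with v hi hj
  rw [norm_mul, norm_pow, norm_pow, Real.norm_eq_abs, Real.norm_eq_abs]
  exact mul_le_one₀ (pow_le_one₀ (abs_nonneg _) hi) (by positivity)
    (pow_le_one₀ (abs_nonneg _) hj)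

open Polynomial in
lemma integral_mul_add_pow_eq_eval [IsFiniteMeasure μ]
    (hS : ∀ᵐ v ∂μ, v 0 ^ 2 + v 1 ^ 2 + v 2 ^ 2 = 1) (n : ℕ) (x : ℝ) :
    ∫ v, (x * v 1 + v 0) ^ n ∂μ =
      (∑ j ∈ Finset.range (n + 1),
        C (n.choose j * ∫ v, v 1 ^ j * v 0 ^ (n - j) ∂μ) * X ^ j).eval x := by
  have hterm : ∀ v : Fin 3 → ℝ, ∀ j, (x * v 1) ^ j * v 0 ^ (n - j) * n.choose j
      = (n.choose j * x ^ j) * (v 1 ^ j * v 0 ^ (n - j)) := fun v j => by ring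
  simp only [add_pow, hterm, eval_finsetSum, eval_mul, eval_C, eval_pow, eval_X]
  rw [integral_finsetSum _ fun j _ => (integrable_pow_mul_pow hS 1 0 j (n - j)).const_mul _]
  refine Finset.sum_congr rfl fun j _ => ?_
  rw [integral_const_mul]
  ring

lemma integral_mul_add_pow_two_mul (hμ : IsOrthogonallyInvariant μ) (K : ℕ) (x : ℝ) :
    ∫ v, (x * v 1 + v 0) ^ (2 * K) ∂μ = (1 + x ^ 2) ^ K * ∫ v, v 0 ^ (2 * K) ∂μ := by
  set r := √(1 + x ^ 2)
  have hr : 0 < r := Real.sqrt_pos.2 (by positivity)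
  have hr2 : r ^ 2 = 1 + x ^ 2 := Real.sq_sqrt (by positivity)
  have hu : (![1 / r, x / r, 0] : Fin 3 → ℝ) 0 ^ 2 + ![1 / r, x / r, 0] 1 ^ 2
      + ![1 / r, x / r, 0] 2 ^ 2 = 1 := by
    simp only [Matrix.cons_val]
    field_simp
    linarith
  have hdot : ∀ v, dot3 v ![1 / r, x / r, 0] = (x * v 1 + v 0) / r := fun v => by
    simp only [dot3, Matrix.cons_val]
    field_simp
    ring
  have h := integral_comp_dot3 hμ hu (g := fun t => t ^ (2 * K)) (by fun_prop)
  simp only [hdot, div_pow, integral_div] at h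
  rw [pow_mul r, hr2, div_eq_iff (by positivity)] at h
  rw [h, mul_comm]

open Polynomial in
lemma odd_mul_integral_sq_mul_pow [IsFiniteMeasure μ] (hμ : IsOrthogonallyInvariant μ)
    (hS : ∀ᵐ v ∂μ, v 0 ^ 2 + v 1 ^ 2 + v 2 ^ 2 = 1) (K : ℕ) :
    (2 * K + 1) * ∫ v, v 1 ^ 2 * v 0 ^ (2 * K) ∂μ = ∫ v, v 0 ^ (2 * K + 2) ∂μ := by
  have hpoly : (∑ j ∈ Finset.range (2 * K + 2 + 1),
        C ((2 * K + 2).choose j * ∫ v, v 1 ^ j * v 0 ^ (2 * K + 2 - j) ∂μ) * X ^ j)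
      = C (∫ v, v 0 ^ (2 * K + 2) ∂μ) * expand ℝ 2 ((1 + X) ^ (K + 1)) :=
    Polynomial.funext fun x => by
      rw [← integral_mul_add_pow_eq_eval hS, show 2 * K + 2 = 2 * (K + 1) by ring,
        integral_mul_add_pow_two_mul hμ]
      simp only [map_pow, map_add, map_one, expand_X, eval_mul, eval_C, eval_pow, eval_add,
        eval_one, eval_X]
      ring
  have h2 := congrArg (coeff · (2 * 1)) hpoly
  rw [coeff_C_mul, coeff_expand_mul' two_pos, coeff_one_add_X_pow, Nat.choose_one_right] at h2
  simp only [finsetSum_coeff, coeff_C_mul, coeff_X_pow, mul_ite, mul_one, mul_zero,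
    Finset.sum_ite_eq, Finset.mem_range, if_pos (show 2 * 1 < 2 * K + 2 + 1 by omega),
    show 2 * K + 2 - 2 * 1 = 2 * K by omega, Nat.cast_choose_two] at h2
  push_cast at h2
  refine mul_left_cancel₀ (show (K + 1 : ℝ) ≠ 0 by positivity) ?_
  linear_combination h2

lemma integral_sq_mul_pow_swap (hμ : IsOrthogonallyInvariant μ) (K : ℕ) :
    ∫ v, v 2 ^ 2 * v 0 ^ (2 * K) ∂μ = ∫ v, v 1 ^ 2 * v 0 ^ (2 * K) ∂μ := by
  have hO : !![1, 0, 0; 0, 0, 1; 0, 1, 0] * (!![1, 0, 0; 0, 0, 1; 0, 1, 0])ᵀ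
      = (1 : Matrix (Fin 3) (Fin 3) ℝ) := by
    ext i j
    fin_cases i <;> fin_cases j <;> simp [Matrix.mul_apply, Fin.sum_univ_three]
  rw [← integral_comp_mulVec hμ hO (f := fun v => v 1 ^ 2 * v 0 ^ (2 * K)) (by fun_prop)]
  simp [mulVec, dotProduct, Fin.sum_univ_three]

lemma odd_mul_integral_pow_succ [IsFiniteMeasure μ] (hμ : IsOrthogonallyInvariant μ)
    (hS : ∀ᵐ v ∂μ, v 0 ^ 2 + v 1 ^ 2 + v 2 ^ 2 = 1) (K : ℕ) :
    (2 * K + 3) * ∫ v, v 0 ^ (2 * K + 2) ∂μ = (2 * K + 1) * ∫ v, v 0 ^ (2 * K) ∂μ := by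
  have hsplit : ∫ v, v 0 ^ (2 * K) ∂μ = ∫ v, v 0 ^ (2 * K + 2) ∂μ
      + ∫ v, v 1 ^ 2 * v 0 ^ (2 * K) ∂μ + ∫ v, v 2 ^ 2 * v 0 ^ (2 * K) ∂μ := by
    have hint := integrable_pow_mul_pow hS (μ := μ)
    have hint₀ : Integrable (fun v => v 0 ^ (2 * K + 2)) μ := by
      simpa using hint 0 0 (2 * K + 2) 0
    rw [← integral_add hint₀ (hint 1 0 2 (2 * K)),
      ← integral_add (f := fun v => v 0 ^ (2 * K + 2) + v 1 ^ 2 * v 0 ^ (2 * K))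
        (hint₀.add (hint 1 0 2 (2 * K))) (hint 2 0 2 (2 * K))]
    refine integral_congr_ae ?_
    filter_upwards [hS] with v hv
    linear_combination (-v 0 ^ (2 * K)) * hv
  rw [hsplit, integral_sq_mul_pow_swap hμ, ← odd_mul_integral_sq_mul_pow hμ hS]
  ring

lemma integral_pow_two_mul [IsProbabilityMeasure μ] (hμ : IsOrthogonallyInvariant μ)
    (hS : ∀ᵐ v ∂μ, v 0 ^ 2 + v 1 ^ 2 + v 2 ^ 2 = 1) (K : ℕ) :
    ∫ v, v 0 ^ (2 * K) ∂μ = 1 / (2 * K + 1) := by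
  induction K with
  | zero => simp
  | succ K ih =>
    have h := odd_mul_integral_pow_succ hμ hS K
    rw [ih, mul_one_div_cancel (by positivity), show 2 * K + 2 = 2 * (K + 1) by ring] at h
    rw [eq_div_iff (by positivity)]
    push_cast
    linear_combination h

lemma integral_Ibin_mul_apply_zero [IsProbabilityMeasure μ]
    (hμ : IsOrthogonallyInvariant μ) (hS : ∀ᵐ v ∂μ, v 0 ^ 2 + v 1 ^ 2 + v 2 ^ 2 = 1)
    {c : ℝ} (hc₀ : c ≠ 0) (hc₁ : |c| < 1) :
    ∫ v, Ibin (c * v 0) ∂μ =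
      (c * artanh c + Real.log (1 - c ^ 2) + artanh c / c - 1) / (2 * Real.log 2) := by
  have hlog2 : 0 < Real.log 2 := Real.log_pos one_lt_two
  set a : ℕ → ℝ := fun k => c ^ (2 * k + 2) / (2 * Real.log 2 * ((k + 1) * (2 * k + 1)))
  have hexp : ∀ᵐ v ∂μ, Ibin (c * v 0) = ∑' k, a k * v 0 ^ (2 * k + 2) := by
    filter_upwards [ae_abs_apply_le_one hS 0] with v hv
    have hcv : |c * v 0| < 1 := by
      rw [abs_mul]
      exact lt_of_le_of_lt (mul_le_of_le_one_right (abs_nonneg c) hv) hc₁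
    rw [← (hasSum_Ibin hcv).tsum_eq]
    congr! 2 with k
    rw [mul_pow, mul_div_right_comm]
  have ha : Summable fun k => |a k| := by
    refine (hasSum_Ibin (x := |c|) (by rwa [abs_abs])).summable.congr fun k => ?_
    rw [abs_div, abs_pow, abs_of_pos (mul_pos (mul_pos two_pos hlog2) (by positivity))]
  rw [integral_congr_ae hexp, integral_tsum_mul_pow (measurable_pi_apply 0).aestronglyMeasurable
    (ae_abs_apply_le_one hS 0) ha]
  refine (((hasSum_pow_div_succ_mul_odd_mul_odd hc₀ hc₁).div_const (2 * Real.log 2)).congr_fun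
    fun k => ?_).tsum_eq
  rw [show 2 * k + 2 = 2 * (k + 1) by ring, integral_pow_two_mul hμ hS]
  simp only [a]
  push_cast
  field_simp
  ring

end Sphere

/-- Average mutual information for isotropic MMMS with correlation matrix `(κ/√3)·I₃`,
for `0 < κ < √3`:
`∫∫ Ibin((κ/√3)(n·m)) dμ(n) dμ(m)
   = ((3+κ²)·artanh(κ/√3) − √3κ(1 − ln(1−κ²/3))) / (√3 κ ln 4)`. -/
theorem stmt3 (μ : Measure (Fin 3 → ℝ)) (hμ : IsUniformSphereMeasure μ)
    (κ : ℝ) (hκ0 : 0 < κ) (hκ1 : κ < Real.sqrt 3) :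
    (∫ m, ∫ n, Ibin ((κ / Real.sqrt 3) * dot3 n m) ∂μ ∂μ) =
      ((3 + κ ^ 2) * artanh (κ / Real.sqrt 3) -
          Real.sqrt 3 * κ * (1 - Real.log (1 - κ ^ 2 / 3))) /
        (Real.sqrt 3 * κ * Real.log 4) := by
  obtain ⟨hprob, hS, hinv⟩ := hμ
  have hsphere : ∀ᵐ v ∂μ, v 0 ^ 2 + v 1 ^ 2 + v 2 ^ 2 = 1 := ae_iff.2 hS
  have hs3 : 0 < √3 := by positivity
  set c := κ / √3 with hc
  have hc₀ : 0 < c := div_pos hκ0 hs3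
  have hc₁ : c < 1 := (div_lt_one hs3).2 hκ1
  have hinner : ∀ᵐ m ∂μ, ∫ n, Ibin (c * dot3 n m) ∂μ = ∫ v, Ibin (c * v 0) ∂μ := by
    filter_upwards [hsphere] with m hm
    exact integral_comp_dot3 hinv hm (measurable_Ibin.comp (measurable_const_mul c))
  rw [integral_congr_ae hinner, integral_const, probReal_univ, one_smul,
    integral_Ibin_mul_apply_zero hinv hsphere hc₀.ne' (abs_lt.2 ⟨by linarith, hc₁⟩)]
  have h3 : √3 ^ 2 = 3 := Real.sq_sqrt (by norm_num)
  have hlog4 : Real.log 4 = 2 * Real.log 2 := by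
    rw [show (4 : ℝ) = 2 ^ 2 by norm_num, Real.log_pow, Nat.cast_ofNat]
  have hlog2 : Real.log 2 ≠ 0 := (Real.log_pos one_lt_two).ne'
  rw [hc, hlog4, div_pow, h3]
  field_simp
  linear_combination artanh (κ / √3) * h3
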